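/- arXiv:2302.14280 — 2 statements merged into one kernel-verified Lean document; each statement's English description precedes it below -/
import Mathlib

section
/- The error-sum function E* : Σ → ℝ, E*(σ) = Σ_{n=1}^∞ (φ(σ) - φ_n(σ)), is continuous with respect to the metric ρ^ℕ(σ,τ) = Σ_{n=1}^∞ ρ(σ_n,τ_n)/n! on Σ. -/
open scoped BigOperators

/-- Reciprocal of an extended natural number as a real, with `1/∞ = 0`. -/
noncomputable def pinv (a : ℕ∞) : ℝ := ((a.toNat : ℕ) : ℝ)⁻¹

/-- First Pierce digit: `⌊1/x⌋` for `x ≠ 0`, and `∞` for `x = 0`. -/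
noncomputable def pd1 (x : ℝ) : ℕ∞ := if x = 0 then ⊤ else (⌊x⁻¹⌋₊ : ℕ∞)

/-- Pierce map `T(x) = 1 - ⌊1/x⌋ x` for `x ≠ 0`, `T(0) = 0`. -/
noncomputable def pT (x : ℝ) : ℝ := if x = 0 then 0 else 1 - (⌊x⁻¹⌋₊ : ℝ) * x

/-- `n`-th Pierce digit `d_n(x) = d_1(T^{n-1} x)` (for `n ≥ 1`). -/
noncomputable def pdig (n : ℕ) (x : ℝ) : ℕ∞ := pd1 (pT^[n-1] x)

/-- `1/(d_1(x) ⋯ d_n(x))`, with the convention that a factor `∞` makes it `0`. -/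
noncomputable def pprodR (n : ℕ) (x : ℝ) : ℝ := ∏ k ∈ Finset.Icc 1 n, pinv (pdig k x)

/-- `n`-th partial sum `s_n(x)` of the Pierce expansion of `x`. -/
noncomputable def psum (n : ℕ) (x : ℝ) : ℝ :=
  ∑ k ∈ Finset.Icc 1 n, (-1 : ℝ) ^ (k + 1) * pprodR k x

/-- The error-sum function of Pierce expansions `E(x) = Σ_{n≥1} (x - s_n(x))`. -/
noncomputable def pE (x : ℝ) : ℝ := ∑' n : ℕ, (x - psum (n + 1) x)

/-- A Pierce sequence (0-indexed: `σ k` is the paper's `σ_{k+1}`): terms are positive, strictly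
increasing while finite, and once a term is `∞` all later terms are `∞`. -/
def IsPierce (σ : ℕ → ℕ∞) : Prop :=
  1 ≤ σ 0 ∧ ∀ n, σ n < σ (n + 1) ∨ (σ n = ⊤ ∧ σ (n + 1) = ⊤)

/-- `n`-th partial sum `φ_n(σ)`. -/
noncomputable def pphiN (n : ℕ) (σ : ℕ → ℕ∞) : ℝ :=
  ∑ k ∈ Finset.range n, (-1 : ℝ) ^ k * ∏ i ∈ Finset.range (k + 1), pinv (σ i)

/-- `φ(σ) = Σ_{k≥1} (-1)^{k+1}/(σ_1 ⋯ σ_k)`. -/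
noncomputable def pphi (σ : ℕ → ℕ∞) : ℝ :=
  ∑' k : ℕ, (-1 : ℝ) ^ k * ∏ i ∈ Finset.range (k + 1), pinv (σ i)

/-- The error-sum function of Pierce sequences `E*(σ) = Σ_{n≥1} (φ(σ) - φ_n(σ))`. -/
noncomputable def pEstar (σ : ℕ → ℕ∞) : ℝ := ∑' n : ℕ, (pphi σ - pphiN (n + 1) σ)

/-- The series formula `Σ_{n≥1} (-1)^n n/(σ_1 ⋯ σ_{n+1})` for the error-sum of a sequence. -/
noncomputable def pEstarSeries (σ : ℕ → ℕ∞) : ℝ :=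
  ∑' n : ℕ, (-1 : ℝ) ^ (n + 1) * (n + 1) * ∏ i ∈ Finset.range (n + 2), pinv (σ i)

/-- The metric `ρ(x,y) = 1/x + 1/y` for `x ≠ y` (with `1/∞ = 0`), `ρ(x,x) = 0`. -/
noncomputable def prho (x y : ℕ∞) : ℝ := if x = y then 0 else pinv x + pinv y

/-- The metric `ρ^ℕ(σ,τ) = Σ_{n≥1} ρ(σ_n, τ_n)/n!` on sequences. -/
noncomputable def prhoN (σ τ : ℕ → ℕ∞) : ℝ :=
  ∑' n : ℕ, prho (σ n) (τ n) / ((n + 1).factorial : ℝ)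

/-! Since `|1/x - 1/y| ≤ ρ(x, y)`, the reciprocal digit `1/τᵢ` is `(i+1)!`-Lipschitz for `ρ^ℕ`,
so every term `1/(τ₁ ⋯ τₖ)` of `φ` and every partial sum `φₙ` depends continuously on `τ`.
On Pierce sequences `τᵢ ≥ i`, so the `k`-th term of `φ` is at most `2^{1-k}` and
`|φ - φₙ| ≤ 2^{1-n}` uniformly; Tannery's theorem (dominated convergence for series), applied
first to `φ` and then to `E* = Σₙ (φ - φₙ)`, gives continuity of `E*`. -/

open Filter Topology Finset

lemma pinv_nonneg (a : ℕ∞) : 0 ≤ pinv a := by unfold pinv; positivity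

lemma pinv_le_one (a : ℕ∞) : pinv a ≤ 1 := Nat.cast_inv_le_one _

lemma pinv_le_inv_of_le {n : ℕ} {a : ℕ∞} (hn : 0 < n) (h : (n : ℕ∞) ≤ a) :
    pinv a ≤ (n : ℝ)⁻¹ := by
  induction a using ENat.recTopCoe with
  | top => simp [pinv]
  | coe a =>
    simp only [pinv, ENat.toNat_natCast]
    gcongr
    exact_mod_cast h

lemma abs_pinv_sub_pinv_le_prho (x y : ℕ∞) : |pinv x - pinv y| ≤ prho x y := by
  unfold prho
  split_ifs with h
  · simp [h]
  · have := pinv_nonneg x; have := pinv_nonneg y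
    exact abs_sub_le_iff.2 ⟨by linarith, by linarith⟩

lemma prho_nonneg (x y : ℕ∞) : 0 ≤ prho x y :=
  (abs_nonneg _).trans (abs_pinv_sub_pinv_le_prho x y)

lemma prho_le_two (x y : ℕ∞) : prho x y ≤ 2 := by
  unfold prho
  split_ifs
  · norm_num
  · linarith [pinv_le_one x, pinv_le_one y]

lemma summable_prhoN (σ τ : ℕ → ℕ∞) :
    Summable fun n : ℕ => prho (σ n) (τ n) / ((n + 1).factorial : ℝ) := by
  have h := ((Real.summable_pow_div_factorial 1).comp_injective (add_left_injective 1)).mul_left 2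
  refine h.of_nonneg_of_le (fun n => ?_) (fun n => ?_)
  · exact div_nonneg (prho_nonneg _ _) (by positivity)
  · simp only [Function.comp_apply, one_pow, ← mul_div_assoc, mul_one]
    gcongr
    exact prho_le_two _ _

lemma prho_le_factorial_mul_prhoN (σ τ : ℕ → ℕ∞) (n : ℕ) :
    prho (σ n) (τ n) ≤ (n + 1).factorial * prhoN σ τ := by
  have h : prho (σ n) (τ n) / ((n + 1).factorial : ℝ) ≤ prhoN σ τ :=
    (summable_prhoN σ τ).le_tsum n fun k _ =>
      div_nonneg (prho_nonneg _ _) (by positivity)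
  rwa [div_le_iff₀' (by positivity)] at h

lemma prhoN_nonneg (σ τ : ℕ → ℕ∞) : 0 ≤ prhoN σ τ :=
  tsum_nonneg fun n =>
    div_nonneg (prho_nonneg _ _) (by positivity)

lemma IsPierce.add_one_le {τ : ℕ → ℕ∞} (hτ : IsPierce τ) (n : ℕ) : (n : ℕ∞) + 1 ≤ τ n := by
  induction n with
  | zero => simpa using hτ.1
  | succ n ih =>
    rcases hτ.2 n with hlt | ⟨-, htop⟩
    · push_cast
      exact (add_le_add_left ih 1).trans (Order.add_one_le_of_lt hlt)
    · simp [htop]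

lemma IsPierce.pinv_le_half {τ : ℕ → ℕ∞} (hτ : IsPierce τ) {n : ℕ} (hn : 0 < n) :
    pinv (τ n) ≤ 1 / 2 := by
  have h2 : ((2 : ℕ) : ℕ∞) ≤ τ n :=
    le_trans (by exact_mod_cast Nat.succ_le_succ hn) (hτ.add_one_le n)
  simpa using pinv_le_inv_of_le two_pos h2

lemma IsPierce.prod_pinv_le {τ : ℕ → ℕ∞} (hτ : IsPierce τ) (k : ℕ) :
    ∏ i ∈ range (k + 1), pinv (τ i) ≤ (1 / 2 : ℝ) ^ k := by
  induction k with
  | zero => simpa using pinv_le_one (τ 0)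
  | succ k ih =>
    rw [prod_range_succ, pow_succ]
    exact mul_le_mul ih (hτ.pinv_le_half k.succ_pos) (pinv_nonneg _) (by positivity)

lemma IsPierce.abs_pphi_term_le {τ : ℕ → ℕ∞} (hτ : IsPierce τ) (k : ℕ) :
    |(-1 : ℝ) ^ k * ∏ i ∈ range (k + 1), pinv (τ i)| ≤ (1 / 2 : ℝ) ^ k := by
  rw [abs_mul, abs_neg_one_pow, one_mul, abs_of_nonneg (prod_nonneg fun i _ => pinv_nonneg _)]
  exact hτ.prod_pinv_le k

lemma abs_tsum_sub_sum_le_of_abs_le_geometric {f : ℕ → ℝ} (hf : ∀ k, |f k| ≤ (1 / 2 : ℝ) ^ k)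
    (n : ℕ) : |∑' k, f k - ∑ k ∈ range (n + 1), f k| ≤ (1 / 2 : ℝ) ^ n := by
  rw [← (summable_geometric_two.of_norm_bounded hf).sum_add_tsum_nat_add (n + 1),
    add_sub_cancel_left]
  refine (tsum_of_norm_bounded (f := fun k => f (k + (n + 1)))
    (hasSum_geometric_two.mul_left ((1 / 2 : ℝ) ^ (n + 1))) fun k => ?_).trans_eq (by ring)
  exact (hf _).trans_eq (by ring)

noncomputable def prhoNhds (σ : ℕ → ℕ∞) : Filter (ℕ → ℕ∞) := comap (prhoN σ) (𝓝 0)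

lemma tendsto_pinv_apply_prhoNhds (σ : ℕ → ℕ∞) (i : ℕ) :
    Tendsto (fun τ => pinv (τ i)) (prhoNhds σ) (𝓝 (pinv (σ i))) := by
  have h0 : Tendsto (fun τ => ((i + 1).factorial : ℝ) * prhoN σ τ) (prhoNhds σ) (𝓝 0) := by
    rw [prhoNhds]
    simpa using (tendsto_comap (f := prhoN σ) (x := 𝓝 0)).const_mul ((i + 1).factorial : ℝ)
  rw [tendsto_iff_norm_sub_tendsto_zero]
  refine squeeze_zero (fun _ => norm_nonneg _) (fun τ => ?_) h0
  rw [Real.norm_eq_abs, abs_sub_comm]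
  exact (abs_pinv_sub_pinv_le_prho _ _).trans (prho_le_factorial_mul_prhoN σ τ i)

lemma tendsto_pphi_term_prhoNhds (σ : ℕ → ℕ∞) (k : ℕ) :
    Tendsto (fun τ => (-1 : ℝ) ^ k * ∏ i ∈ range (k + 1), pinv (τ i)) (prhoNhds σ)
      (𝓝 ((-1 : ℝ) ^ k * ∏ i ∈ range (k + 1), pinv (σ i))) :=
  (tendsto_finsetProd _ fun i _ => tendsto_pinv_apply_prhoNhds σ i).const_mul _

lemma tendsto_pphiN_prhoNhds (σ : ℕ → ℕ∞) (n : ℕ) :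
    Tendsto (pphiN n) (prhoNhds σ) (𝓝 (pphiN n σ)) :=
  tendsto_finsetSum _ fun k _ => tendsto_pphi_term_prhoNhds σ k

lemma tendsto_pphi_prhoNhds (σ : ℕ → ℕ∞) :
    Tendsto pphi (prhoNhds σ ⊓ 𝓟 {τ | IsPierce τ}) (𝓝 (pphi σ)) :=
  tendsto_tsum_of_dominated_convergence summable_geometric_two
    (fun k => (tendsto_pphi_term_prhoNhds σ k).mono_left inf_le_left)
    (eventually_inf_principal.2 (.of_forall fun _ hτ k => hτ.abs_pphi_term_le k))

lemma IsPierce.abs_pphi_sub_pphiN_le {τ : ℕ → ℕ∞} (hτ : IsPierce τ) (n : ℕ) :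
    |pphi τ - pphiN (n + 1) τ| ≤ (1 / 2 : ℝ) ^ n :=
  abs_tsum_sub_sum_le_of_abs_le_geometric hτ.abs_pphi_term_le n

lemma tendsto_pEstar_prhoNhds (σ : ℕ → ℕ∞) :
    Tendsto pEstar (prhoNhds σ ⊓ 𝓟 {τ | IsPierce τ}) (𝓝 (pEstar σ)) :=
  tendsto_tsum_of_dominated_convergence summable_geometric_two
    (fun n => (tendsto_pphi_prhoNhds σ).sub
      ((tendsto_pphiN_prhoNhds σ (n + 1)).mono_left inf_le_left))
    (eventually_inf_principal.2 (.of_forall fun _ hτ n => hτ.abs_pphi_sub_pphiN_le n))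

theorem stmt13_general (σ : ℕ → ℕ∞) :
    ∀ ε > (0 : ℝ), ∃ δ > (0 : ℝ), ∀ τ : ℕ → ℕ∞, IsPierce τ →
      prhoN σ τ < δ → |pEstar τ - pEstar σ| < ε := by
  intro ε hε
  have hbasis : (prhoNhds σ ⊓ 𝓟 {τ | IsPierce τ}).HasBasis (fun δ : ℝ => 0 < δ)
      fun δ => prhoN σ ⁻¹' Metric.ball 0 δ ∩ {τ | IsPierce τ} :=
    (Metric.nhds_basis_ball.comap _).inf_principal _
  obtain ⟨δ, hδ, h⟩ :=
    (hbasis.tendsto_iff Metric.nhds_basis_ball).1 (tendsto_pEstar_prhoNhds σ) ε hε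
  refine ⟨δ, hδ, fun τ hτ hστ => h τ ⟨?_, hτ⟩⟩
  simpa [abs_of_nonneg (prhoN_nonneg σ τ)] using hστ

theorem stmt13 (σ : ℕ → ℕ∞) (hσ : IsPierce σ) :
    ∀ ε > (0 : ℝ), ∃ δ > (0 : ℝ), ∀ τ : ℕ → ℕ∞, IsPierce τ →
      prhoN σ τ < δ → |pEstar τ - pEstar σ| < ε :=
  stmt13_general σ
end

section
/- The error-sum function E : [0,1] → ℝ of Pierce expansions is not of bounded variation on [0,1]. -/
open scoped BigOperators

/-!
On the cylinder `(1/(k+1), 1/k)` the Pierce map is `T x = 1 - k x`, a decreasing bijection onto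
`(0, 1/(k+1))`, and on terminating expansions `E x = -(T x + E (T x)) / k`. So if `V c m` is the
variation of `x ↦ c x + E x` over the terminating points of `(0, 1/m)`, then
`V c m ≥ ∑_{k ≥ m} V (c+1) (k+1) / k`, while the points `1/j`, where `E` vanishes, give
`V c m ≥ c / (m+1)`. Since `∑_{k ≥ m} 1/(k (k+2))` exceeds the telescoping
`∑_{k ≥ m} 1/((k+1)(k+2)) = 1/(m+1)`, induction gives `V c m ≥ (c + n)/(m+1)` for every `n`,
so `E` has infinite variation already on `(0, 1)`.
-/

open Set Filter Topology
open scoped ENNReal NNReal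

theorem eVariationOn.tsum_le_iUnion {α E : Type*} [LinearOrder α] [PseudoEMetricSpace E]
    (f : α → E) {a : ℕ → α} (ha : Antitone a) {s : ℕ → Set α}
    (hs : ∀ j, s j ⊆ Icc (a (j + 1)) (a j)) :
    ∑' j, eVariationOn f (s j) ≤ eVariationOn f (⋃ j, s j) := by
  refine ENNReal.tsum_le_of_sum_range_le fun n => ?_
  have hfin : ∑ j ∈ Finset.range n, eVariationOn f (s j)
      ≤ eVariationOn f (⋃ j ∈ Finset.range n, s j) := by
    induction n with
    | zero => simp
    | succ n ih =>
      rw [Finset.sum_range_succ, Finset.range_add_one, Finset.set_biUnion_insert, add_comm]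
      grw [ih]
      refine eVariationOn.add_le_union f fun x hx y hy => ?_
      obtain ⟨j, hj, hy⟩ := mem_iUnion₂.mp hy
      exact ((hs n hx).2.trans (ha (Finset.mem_range.mp hj))).trans (hs j hy).1
  exact hfin.trans (eVariationOn.mono f (iUnion₂_subset fun j _ => subset_iUnion s j))

lemma hasSum_div_mul_add_one {a C : ℝ} (ha : 0 < a) (hC : 0 ≤ C) :
    HasSum (fun j : ℕ => C / ((a + j) * (a + j + 1))) (C / a) := by
  rw [hasSum_iff_tendsto_nat_of_nonneg (fun j => by positivity)]
  have hpartial : ∀ n : ℕ,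
      ∑ j ∈ Finset.range n, C / ((a + j) * (a + j + 1)) = C / a - C / (a + n) := by
    intro n
    induction n with
    | zero => simp
    | succ n ih =>
      rw [Finset.sum_range_succ, ih]
      push_cast
      field_simp
      ring
  have hlim : Tendsto (fun n : ℕ => C / (a + n)) atTop (𝓝 0) :=
    tendsto_const_nhds.div_atTop (tendsto_atTop_add_const_left _ _ tendsto_natCast_atTop_atTop)
  simpa [hpartial] using tendsto_const_nhds.sub hlim

lemma tsum_ofReal_div_mul_add_one {a C : ℝ} (ha : 0 < a) (hC : 0 ≤ C) :
    ∑' j : ℕ, ENNReal.ofReal (C / ((a + j) * (a + j + 1))) = ENNReal.ofReal (C / a) := by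
  have h := hasSum_div_mul_add_one ha hC
  rw [← ENNReal.ofReal_tsum_of_nonneg (fun j => by positivity) h.summable, h.tsum_eq]

lemma pinv_top : pinv ⊤ = 0 := by simp [pinv]

lemma pinv_pd1_of_ne_zero {x : ℝ} (hx : x ≠ 0) : pinv (pd1 x) = (⌊x⁻¹⌋₊ : ℝ)⁻¹ := by
  simp [pinv, pd1, hx]

lemma pT_zero : pT 0 = 0 := by simp [pT]

lemma pT_mem_Icc {x : ℝ} (hx : x ∈ Icc 0 1) : pT x ∈ Icc 0 1 := by
  rcases hx.1.eq_or_lt with rfl | hpos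
  · simp [pT_zero]
  rw [pT, if_neg hpos.ne']
  have hd : (⌊x⁻¹⌋₊ : ℝ) * x ≤ 1 := by
    calc (⌊x⁻¹⌋₊ : ℝ) * x ≤ x⁻¹ * x := by gcongr; exact Nat.floor_le (by positivity)
      _ = 1 := inv_mul_cancel₀ hpos.ne'
  constructor <;> nlinarith [(Nat.cast_nonneg ⌊x⁻¹⌋₊ : (0 : ℝ) ≤ _)]

lemma pprodR_succ_top (n : ℕ) (x : ℝ) :
    pprodR (n + 1) x = pprodR n x * pinv (pdig (n + 1) x) := by
  rw [pprodR, pprodR, Finset.prod_Icc_succ_top (by omega)]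

lemma psum_succ_top (n : ℕ) (x : ℝ) :
    psum (n + 1) x = psum n x + (-1) ^ (n + 2) * pprodR (n + 1) x := by
  rw [psum, psum, Finset.sum_Icc_succ_top (by omega)]

lemma pdig_succ_succ (n : ℕ) (x : ℝ) : pdig (n + 2) x = pdig (n + 1) (pT x) := by
  simp [pdig, Function.iterate_succ_apply]

lemma pprodR_succ (n : ℕ) (x : ℝ) : pprodR (n + 1) x = pinv (pd1 x) * pprodR n (pT x) := by
  induction n with
  | zero => simp [pprodR, pdig]
  | succ n ih => rw [pprodR_succ_top, ih, pdig_succ_succ, pprodR_succ_top, mul_assoc]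

lemma psum_succ (n : ℕ) (x : ℝ) : psum (n + 1) x = pinv (pd1 x) * (1 - psum n (pT x)) := by
  induction n with
  | zero => simp [psum, pprodR, pdig]
  | succ n ih =>
    rw [psum_succ_top, ih, pprodR_succ, psum_succ_top]
    ring

lemma psum_apply_zero (n : ℕ) : psum n 0 = 0 := by
  cases n with
  | zero => simp [psum]
  | succ n => simp [psum_succ, pd1, pinv_top]

lemma sub_psum_succ {x : ℝ} (hx : x ∈ Icc 0 1) (n : ℕ) :
    x - psum (n + 1) x = pinv (pd1 x) * (psum n (pT x) - pT x) := by
  rcases hx.1.eq_or_lt with rfl | hpos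
  · simp [psum_apply_zero, pd1, pinv_top]
  have hd : (⌊x⁻¹⌋₊ : ℝ) ≠ 0 := by
    have : 1 ≤ ⌊x⁻¹⌋₊ := Nat.le_floor (by simpa using one_le_inv_iff₀.mpr ⟨hpos, hx.2⟩)
    positivity
  rw [psum_succ, pinv_pd1_of_ne_zero hpos.ne', pT, if_neg hpos.ne']
  generalize psum n _ = s
  generalize (⌊x⁻¹⌋₊ : ℝ) = d at hd ⊢
  field_simp
  ring

def pierceTerminating : Set ℝ := {x | ∃ n, pT^[n] x = 0}

lemma pT_mem_pierceTerminating {x : ℝ} (hx : x ∈ pierceTerminating) :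
    pT x ∈ pierceTerminating := by
  obtain ⟨n, hn⟩ := hx
  exact ⟨n, by rw [← Function.iterate_succ_apply, Function.iterate_succ_apply', hn, pT_zero]⟩

lemma mem_pierceTerminating_of_pT_mem {x : ℝ} (hx : pT x ∈ pierceTerminating) :
    x ∈ pierceTerminating := by
  obtain ⟨n, hn⟩ := hx
  exact ⟨n + 1, by rwa [Function.iterate_succ_apply]⟩

lemma sub_psum_eq_zero {l : ℕ} : ∀ {x : ℝ}, x ∈ Icc 0 1 → pT^[l] x = 0 →
    ∀ {n : ℕ}, l ≤ n → x - psum n x = 0 := by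
  induction l with
  | zero =>
    rintro x - rfl n -
    simp [psum_apply_zero]
  | succ l ih =>
    rintro x hx hl (_ | n) hn
    · omega
    rw [sub_psum_succ hx, ← neg_sub, ih (pT_mem_Icc hx) hl (by omega), neg_zero, mul_zero]

lemma pE_eq_of_mem_pierceTerminating {x : ℝ} (hx : x ∈ Icc 0 1) (hxT : x ∈ pierceTerminating) :
    pE x = -pinv (pd1 x) * (pT x + pE (pT x)) := by
  set y := pT x
  obtain ⟨l, hl⟩ := pT_mem_pierceTerminating hxT
  have hsum : Summable fun n => psum n y - y := by
    refine summable_of_ne_finset_zero (s := Finset.range l) fun n hn => ?_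
    rw [← neg_sub, sub_psum_eq_zero (pT_mem_Icc hx) hl (by simpa using hn), neg_zero]
  calc pE x = ∑' n, pinv (pd1 x) * (psum n y - y) := tsum_congr (sub_psum_succ hx)
    _ = pinv (pd1 x) * ((psum 0 y - y) + ∑' n, -(y - psum (n + 1) y)) := by
      rw [tsum_mul_left, hsum.tsum_eq_zero_add]
      simp only [neg_sub]
    _ = -pinv (pd1 x) * (y + pE y) := by
      rw [tsum_neg, pE, show psum 0 y = 0 by simp [psum]]
      ring

lemma pE_zero : pE 0 = 0 := by
  rw [pE_eq_of_mem_pierceTerminating ⟨le_rfl, zero_le_one⟩ ⟨0, rfl⟩]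
  simp [pd1, pinv_top]

lemma pT_inv_natCast {j : ℕ} (hj : 1 ≤ j) : pT (j : ℝ)⁻¹ = 0 := by
  have : (j : ℝ) ≠ 0 := by positivity
  simp [pT, this]

lemma inv_natCast_mem_pierceTerminating {j : ℕ} (hj : 1 ≤ j) :
    (j : ℝ)⁻¹ ∈ pierceTerminating :=
  ⟨1, pT_inv_natCast hj⟩

lemma pE_inv_natCast {j : ℕ} (hj : 1 ≤ j) : pE (j : ℝ)⁻¹ = 0 := by
  have hj' : (1 : ℝ) ≤ j := by exact_mod_cast hj
  rw [pE_eq_of_mem_pierceTerminating ⟨by positivity, inv_le_one_of_one_le₀ hj'⟩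
    (inv_natCast_mem_pierceTerminating hj), pT_inv_natCast hj, pE_zero]
  ring

lemma one_sub_div_mem_Ioo {k : ℕ} (hk : 1 ≤ k) {y : ℝ} (hy : y ∈ Ioo 0 ((k : ℝ) + 1)⁻¹) :
    (1 - y) / k ∈ Ioo ((k : ℝ) + 1)⁻¹ (k : ℝ)⁻¹ := by
  have hk' : (0 : ℝ) < k := by exact_mod_cast hk
  have hy1 : y * (k + 1) < 1 := by
    simpa [inv_mul_cancel₀ (by positivity : (k : ℝ) + 1 ≠ 0)] using
      mul_lt_mul_of_pos_right hy.2 (by positivity : (0 : ℝ) < k + 1)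
  constructor
  · rw [inv_lt_iff_one_lt_mul₀ (by positivity), div_mul_eq_mul_div, lt_div_iff₀ hk']
    nlinarith [hy.1]
  · rw [div_lt_iff₀ hk', inv_mul_cancel₀ hk'.ne']
    linarith [hy.1]

lemma floor_inv_of_mem_Ioo {k : ℕ} {x : ℝ} (hx : x ∈ Ioo ((k : ℝ) + 1)⁻¹ (k : ℝ)⁻¹) :
    ⌊x⁻¹⌋₊ = k := by
  have hx0 : 0 < x := lt_trans (by positivity) hx.1
  rw [Nat.floor_eq_iff (by positivity)]
  constructor
  · rcases (Nat.zero_le k).eq_or_lt with rfl | hk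
    · simpa using hx0.le
    exact (le_inv_comm₀ (by exact_mod_cast hk : (0 : ℝ) < k) hx0).mpr hx.2.le
  · exact (inv_lt_comm₀ hx0 (by positivity)).mpr hx.1

lemma pT_one_sub_div {k : ℕ} (hk : 1 ≤ k) {y : ℝ} (hy : y ∈ Ioo 0 ((k : ℝ) + 1)⁻¹) :
    pT ((1 - y) / k) = y := by
  have hx := one_sub_div_mem_Ioo hk hy
  have hk' : (k : ℝ) ≠ 0 := by positivity
  rw [pT, if_neg (lt_trans (by positivity) hx.1).ne', floor_inv_of_mem_Ioo hx]
  field_simp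
  ring

/-- Tilting `E` by a linear term makes the family closed under the self-similarity of `E` on
the cylinders `(1/(k+1), 1/k)`, see `pEtilt_one_sub_div`. -/
noncomputable def pEtilt (c x : ℝ) : ℝ := c * x + pE x

lemma pEtilt_inv_natCast (c : ℝ) {j : ℕ} (hj : 1 ≤ j) : pEtilt c (j : ℝ)⁻¹ = c / j := by
  rw [pEtilt, pE_inv_natCast hj, add_zero, div_eq_mul_inv]

lemma pEtilt_one_sub_div (c : ℝ) {k : ℕ} (hk : 1 ≤ k) {y : ℝ}
    (hy : y ∈ pierceTerminating ∩ Ioo 0 ((k : ℝ) + 1)⁻¹) :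
    pEtilt c ((1 - y) / k) = (c - pEtilt (c + 1) y) / k := by
  have hx := one_sub_div_mem_Ioo hk hy.2
  have hx0 : 0 < (1 - y) / k := lt_trans (by positivity) hx.1
  have hxT : (1 - y) / k ∈ pierceTerminating :=
    mem_pierceTerminating_of_pT_mem (by rw [pT_one_sub_div hk hy.2]; exact hy.1)
  have hx1 : (1 - y) / k ≤ 1 := hx.2.le.trans (inv_le_one_of_one_le₀ (by exact_mod_cast hk))
  have hk' : (k : ℝ) ≠ 0 := by positivity
  rw [pEtilt, pEtilt, pE_eq_of_mem_pierceTerminating ⟨hx0.le, hx1⟩ hxT,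
    pinv_pd1_of_ne_zero hx0.ne', floor_inv_of_mem_Ioo hx, pT_one_sub_div hk hy.2]
  field_simp
  ring

noncomputable def pEVar (c : ℝ) (m : ℕ) : ℝ≥0∞ :=
  eVariationOn (pEtilt c) (pierceTerminating ∩ Ioo 0 (m : ℝ)⁻¹)

lemma pEVar_succ_le (c : ℝ) {k : ℕ} (hk : 1 ≤ k) :
    pEVar (c + 1) (k + 1) ≤
      k * eVariationOn (pEtilt c) (pierceTerminating ∩ Ioo ((k : ℝ) + 1)⁻¹ (k : ℝ)⁻¹) := by
  set S := pierceTerminating ∩ Ioo 0 ((k : ℝ) + 1)⁻¹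
  set φ : ℝ → ℝ := fun y => (1 - y) / k
  have hφ : MapsTo φ S (pierceTerminating ∩ Ioo ((k : ℝ) + 1)⁻¹ (k : ℝ)⁻¹) := fun y hy =>
    ⟨mem_pierceTerminating_of_pT_mem (by rw [pT_one_sub_div hk hy.2]; exact hy.1),
      one_sub_div_mem_Ioo hk hy.2⟩
  have hanti : AntitoneOn φ S := fun a _ b _ hab => by dsimp [φ]; gcongr
  have hlip : LipschitzWith (k : ℝ≥0) fun t : ℝ => c - k * t :=
    LipschitzWith.of_dist_le_mul fun a b => by
      rw [Real.dist_eq, Real.dist_eq, NNReal.coe_natCast,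
        show c - k * a - (c - k * b) = -(k * (a - b)) by ring, abs_neg, abs_mul, Nat.abs_cast]
  calc pEVar (c + 1) (k + 1) = eVariationOn ((fun t => c - k * t) ∘ (pEtilt c ∘ φ)) S := by
        rw [pEVar, Nat.cast_succ]
        refine eVariationOn.eq_of_eqOn fun y hy => ?_
        simp only [Function.comp_apply, φ, pEtilt_one_sub_div c hk hy]
        field_simp
        ring
    _ ≤ k * eVariationOn (pEtilt c ∘ φ) S := by
        simpa using hlip.lipschitzOnWith.comp_eVariationOn_le (mapsTo_univ _ S)
    _ ≤ k * eVariationOn (pEtilt c) (pierceTerminating ∩ Ioo ((k : ℝ) + 1)⁻¹ (k : ℝ)⁻¹) := by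
        gcongr
        exact eVariationOn.comp_le_of_antitoneOn _ φ hanti hφ

lemma ofReal_div_le_pEVar {c : ℝ} (hc : 0 ≤ c) {m : ℕ} (hm : 1 ≤ m) :
    ENNReal.ofReal (c / (m + 1)) ≤ pEVar c m := by
  set a : ℕ → ℝ := fun j => ((m + 1 + j : ℕ) : ℝ)⁻¹
  have ha : Antitone a := fun i j hij => inv_anti₀ (by positivity) (by gcongr)
  have hs : ∀ j, ({a (j + 1), a j} : Set ℝ) ⊆ Icc (a (j + 1)) (a j) := fun j =>
    pair_subset ⟨le_rfl, ha j.le_succ⟩ ⟨ha j.le_succ, le_rfl⟩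
  have hsub : ⋃ j, ({a (j + 1), a j} : Set ℝ) ⊆ pierceTerminating ∩ Ioo 0 (m : ℝ)⁻¹ := by
    have hmem : ∀ i, a i ∈ pierceTerminating ∩ Ioo 0 (m : ℝ)⁻¹ := fun i =>
      ⟨inv_natCast_mem_pierceTerminating (by omega), by positivity,
        inv_strictAnti₀ (by positivity) (by push_cast; linarith)⟩
    exact iUnion_subset fun j => pair_subset (hmem (j + 1)) (hmem j)
  have hterm : ∀ j : ℕ, ENNReal.ofReal (c / ((m + 1 + j) * (m + 1 + j + 1)))
      ≤ eVariationOn (pEtilt c) {a (j + 1), a j} := by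
    intro j
    refine le_of_eq_of_le ?_ (eVariationOn.edist_le _ (mem_insert_of_mem _ rfl) (mem_insert _ _))
    rw [pEtilt_inv_natCast c (by omega), pEtilt_inv_natCast c (by omega), edist_dist,
      Real.dist_eq, abs_of_nonneg (sub_nonneg.mpr (by gcongr; omega))]
    congr 1
    push_cast
    field_simp
    ring
  calc ENNReal.ofReal (c / (m + 1))
      = ∑' j : ℕ, ENNReal.ofReal (c / ((m + 1 + j) * (m + 1 + j + 1))) :=
        (tsum_ofReal_div_mul_add_one (by positivity) hc).symm
    _ ≤ ∑' j, eVariationOn (pEtilt c) {a (j + 1), a j} := ENNReal.tsum_le_tsum hterm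
    _ ≤ eVariationOn (pEtilt c) (⋃ j, ({a (j + 1), a j} : Set ℝ)) :=
        eVariationOn.tsum_le_iUnion _ ha hs
    _ ≤ pEVar c m := eVariationOn.mono _ hsub

lemma ofReal_div_le_pEVar_of_succ {c C : ℝ} (hC : 0 ≤ C)
    (h : ∀ k : ℕ, 1 ≤ k → ENNReal.ofReal (C / (k + 2)) ≤ pEVar (c + 1) (k + 1))
    {m : ℕ} (hm : 1 ≤ m) : ENNReal.ofReal (C / (m + 1)) ≤ pEVar c m := by
  set a : ℕ → ℝ := fun j => ((m + j : ℕ) : ℝ)⁻¹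
  set s : ℕ → Set ℝ := fun j => pierceTerminating ∩ Ioo (((m + j : ℕ) : ℝ) + 1)⁻¹ (a j)
  have ha : Antitone a := fun i j hij => inv_anti₀ (by positivity) (by gcongr)
  have hs : ∀ j, s j ⊆ Icc (a (j + 1)) (a j) := fun j =>
    inter_subset_right.trans (by simpa [a, add_assoc] using Ioo_subset_Icc_self)
  have hsub : ⋃ j, s j ⊆ pierceTerminating ∩ Ioo 0 (m : ℝ)⁻¹ := by
    refine iUnion_subset fun j x hx => ⟨hx.1, lt_trans (by positivity) hx.2.1, hx.2.2.trans_le ?_⟩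
    exact inv_anti₀ (by positivity) (by simp)
  have hterm : ∀ j : ℕ, ENNReal.ofReal (C / ((m + 1 + j) * (m + 1 + j + 1)))
      ≤ eVariationOn (pEtilt c) (s j) := by
    intro j
    have hk : 1 ≤ m + j := by omega
    have hk0 : ((m + j : ℕ) : ℝ≥0∞) ≠ 0 := by exact_mod_cast (by omega : m + j ≠ 0)
    rw [← ENNReal.mul_le_mul_iff_right hk0 (ENNReal.natCast_ne_top _)]
    refine le_trans ?_ ((h _ hk).trans (pEVar_succ_le c hk))
    rw [← ENNReal.ofReal_natCast, ← ENNReal.ofReal_mul (by positivity)]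
    refine ENNReal.ofReal_le_ofReal ?_
    push_cast
    rw [mul_div_assoc', div_le_div_iff₀ (by positivity) (by positivity)]
    nlinarith
  calc ENNReal.ofReal (C / (m + 1))
      = ∑' j : ℕ, ENNReal.ofReal (C / ((m + 1 + j) * (m + 1 + j + 1))) :=
        (tsum_ofReal_div_mul_add_one (by positivity) hC).symm
    _ ≤ ∑' j, eVariationOn (pEtilt c) (s j) := ENNReal.tsum_le_tsum hterm
    _ ≤ eVariationOn (pEtilt c) (⋃ j, s j) := eVariationOn.tsum_le_iUnion _ ha hs
    _ ≤ pEVar c m := eVariationOn.mono _ hsub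

lemma ofReal_add_div_le_pEVar (n : ℕ) :
    ∀ {c : ℝ}, 0 ≤ c → ∀ {m : ℕ}, 1 ≤ m → ENNReal.ofReal ((c + n) / (m + 1)) ≤ pEVar c m := by
  induction n with
  | zero =>
    intro c hc m hm
    simpa using ofReal_div_le_pEVar hc hm
  | succ n ih =>
    intro c hc m hm
    refine ofReal_div_le_pEVar_of_succ (by positivity) (fun k hk => ?_) hm
    convert ih (c := c + 1) (by positivity) (m := k + 1) (by omega) using 2
    push_cast
    ring

theorem stmt15 : ¬ BoundedVariationOn pE (Set.Icc (0 : ℝ) 1) := by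
  have hle : ∀ n : ℕ, ENNReal.ofReal (n / 2) ≤ eVariationOn pE (Icc 0 1) := fun n => calc
    ENNReal.ofReal (n / 2) ≤ pEVar 0 1 := by
        simpa [one_add_one_eq_two] using ofReal_add_div_le_pEVar n le_rfl le_rfl
    _ ≤ eVariationOn pE (Icc 0 1) := by
        have : pEtilt 0 = pE := funext fun x => by simp [pEtilt]
        rw [pEVar, this]
        exact eVariationOn.mono _ fun x hx => ⟨hx.2.1.le, by simpa using hx.2.2.le⟩
  intro hbv
  obtain ⟨n, hn⟩ := exists_nat_gt (2 * (eVariationOn pE (Icc 0 1)).toReal)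
  have := (ENNReal.ofReal_le_iff_le_toReal hbv).mp (hle n)
  linarith
end
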